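/- Let n ≥ 1 and let λ_1 ≥ λ_2 ≥ ... ≥ λ_n be real numbers with Σ_{i=1}^n λ_i² = 1. Define I₁ = {j : λ_1 − λ_j > 1} and I = {(i,j) : 1 ≤ i ≤ j ≤ n, λ_i − λ_j > 1}, and suppose I = {1} × I₁ with n₀ := |I| ≥ 1. Then Σ_{(i,j)∈I} [(λ_i − λ_j)² − 1] = 1 if and only if 1 ≤ n₀ < n, λ_1 = √(n₀/(n₀+1)), λ_{n−n₀+1} = ... = λ_n = −1/√(n₀² + n₀), and λ_k = 0 for all other indices k. -/

import Mathlib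

/-!
Write `a = λ₁`, `m = |I₁|` and `S` for the gap sum. Using `∑ λᵢ² = 1`, one has the identity
`m (1 - S) = ∑_{j ∈ I₁} (a + m λⱼ)² + m (m + 1) ∑_{k ∉ {1} ∪ I₁} λₖ²`,
so `S = 1` exactly when `λⱼ = -a/m` on `I₁` and `λₖ = 0` off `{1} ∪ I₁`. In that case
`∑ λᵢ² = 1` becomes `a² (m + 1) / m = 1`, and a gap `a - λⱼ > 0` forces `a > 0`, which pins down
`a = √(m/(m+1))`. Monotonicity makes `I₁` an upper set, i.e. the last `m` indices.
-/

open Finset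

theorem mul_one_sub_sum_gap_sq_sub_one {ι R : Type*} [CommRing R] (s : Finset ι) (a : R)
    (x : ι → R) :
    (#s : R) * (1 - ∑ j ∈ s, ((a - x j) ^ 2 - 1)) =
      ∑ j ∈ s, (a + #s * x j) ^ 2 + #s * (#s + 1) * (1 - a ^ 2 - ∑ j ∈ s, x j ^ 2) := by
  have h₁ : ∑ j ∈ s, ((a - x j) ^ 2 - 1) =
      #s * a ^ 2 - 2 * a * ∑ j ∈ s, x j + ∑ j ∈ s, x j ^ 2 - #s := by
    simp only [sub_sq, sum_sub_distrib, sum_add_distrib, sum_const, nsmul_eq_mul, ← mul_sum,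
      mul_one]
  have h₂ : ∑ j ∈ s, (a + #s * x j) ^ 2 =
      #s * a ^ 2 + 2 * a * #s * ∑ j ∈ s, x j + #s ^ 2 * ∑ j ∈ s, x j ^ 2 := by
    simp only [add_sq, mul_pow, ← mul_assoc, sum_add_distrib, sum_const, nsmul_eq_mul, ← mul_sum]
  rw [h₁, h₂]
  ring

theorem Real.sqrt_div_add_one_eq_div_sqrt {m : ℝ} (hm : 0 < m) :
    √(m / (m + 1)) = m / √(m ^ 2 + m) := by
  rw [eq_div_iff (Real.sqrt_pos.2 (by positivity)).ne', ← Real.sqrt_mul (by positivity),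
    show m / (m + 1) * (m ^ 2 + m) = m ^ 2 by field_simp, Real.sqrt_sq hm.le]

section

variable {ι : Type*} [Fintype ι] [DecidableEq ι]

theorem sum_univ_eq_add_sum_add_sum_compl_insert {M : Type*} [AddCommMonoid M] (f : ι → M)
    {z : ι} {s : Finset ι} (hz : z ∉ s) :
    ∑ i, f i = f z + ∑ j ∈ s, f j + ∑ k ∈ (insert z s)ᶜ, f k := by
  rw [← sum_compl_add_sum (insert z s), sum_insert hz, add_comm, add_assoc]

theorem sum_gap_sq_sub_one_eq_one_iff_of_sum_sq_eq_one {x : ι → ℝ} {z : ι} {s : Finset ι}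
    (hz : z ∉ s) (hs : s.Nonempty) (hx : ∑ i, x i ^ 2 = 1) :
    ∑ j ∈ s, ((x z - x j) ^ 2 - 1) = 1 ↔
      (∀ j ∈ s, #s * x j = -x z) ∧ ∀ k ∉ insert z s, x k = 0 := by
  have hm : (0 : ℝ) < #s := by exact_mod_cast hs.card_pos
  have hrest : 1 - x z ^ 2 - ∑ j ∈ s, x j ^ 2 = ∑ k ∈ (insert z s)ᶜ, x k ^ 2 := by
    rw [← hx, sum_univ_eq_add_sum_add_sum_compl_insert _ hz]; ring
  have key := mul_one_sub_sum_gap_sq_sub_one s (x z) x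
  rw [hrest] at key
  have hT := sum_nonneg fun j (_ : j ∈ s) => sq_nonneg (x z + #s * x j)
  have hQ := sum_nonneg fun k (_ : k ∈ (insert z s)ᶜ) => sq_nonneg (x k)
  have hc : (0 : ℝ) < #s * (#s + 1) := by positivity
  rw [← sub_eq_zero, ← neg_sub, neg_eq_zero, ← mul_eq_zero_iff_left hm.ne', key,
    add_eq_zero_iff_of_nonneg hT (mul_nonneg hc.le hQ), mul_eq_zero_iff_left hc.ne',
    sum_eq_zero_iff_of_nonneg fun _ _ => sq_nonneg _,
    sum_eq_zero_iff_of_nonneg fun _ _ => sq_nonneg _]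
  simp only [sq_eq_zero_iff, add_eq_zero_iff_eq_neg', mem_compl]

theorem sq_eq_div_add_one_of_sum_sq_eq_one {x : ι → ℝ} {z : ι} {s : Finset ι}
    (hz : z ∉ s) (hs : s.Nonempty) (hx : ∑ i, x i ^ 2 = 1)
    (hsx : ∀ j ∈ s, #s * x j = -x z) (hrest : ∀ k ∉ insert z s, x k = 0) :
    x z ^ 2 = #s / (#s + 1) := by
  have hm : (0 : ℝ) < #s := by exact_mod_cast hs.card_pos
  have h₁ : x z ^ 2 + ∑ j ∈ s, x j ^ 2 = 1 := by
    rw [← hx, sum_univ_eq_add_sum_add_sum_compl_insert _ hz,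
      sum_eq_zero (s := (insert z s)ᶜ) fun k hk => by rw [hrest k (mem_compl.1 hk)]; ring,
      add_zero]
  have h₂ : (#s : ℝ) ^ 2 * ∑ j ∈ s, x j ^ 2 = #s * x z ^ 2 := by
    rw [mul_sum, sum_congr rfl fun j hj => by rw [← mul_pow, hsx j hj, neg_sq], sum_const,
      nsmul_eq_mul]
  rw [eq_div_iff (by positivity)]
  apply mul_left_cancel₀ hm.ne'
  linear_combination (#s : ℝ) ^ 2 * h₁ - h₂

theorem sum_gap_sq_sub_one_eq_one_iff {x : ι → ℝ} {z j₀ : ι} {s : Finset ι}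
    (hz : z ∉ s) (hj₀ : j₀ ∈ s) (hlt : x j₀ < x z) (hx : ∑ i, x i ^ 2 = 1) :
    ∑ j ∈ s, ((x z - x j) ^ 2 - 1) = 1 ↔
      x z = √(#s / (#s + 1)) ∧ (∀ j ∈ s, x j = -1 / √(#s ^ 2 + #s)) ∧
        ∀ k ∉ insert z s, x k = 0 := by
  have hm : (0 : ℝ) < #s := by exact_mod_cast card_pos.2 ⟨j₀, hj₀⟩
  have hval : ∀ j, x j = -1 / √(#s ^ 2 + #s) ↔ #s * x j = -√(#s / (#s + 1)) := by
    have : 0 < √((#s : ℝ) ^ 2 + #s) := Real.sqrt_pos.2 (by positivity)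
    intro j
    rw [Real.sqrt_div_add_one_eq_div_sqrt hm]
    constructor <;> intro h <;> field_simp at h ⊢ <;> linarith
  rw [sum_gap_sq_sub_one_eq_one_iff_of_sum_sq_eq_one hz ⟨j₀, hj₀⟩ hx]
  constructor
  · rintro ⟨hsx, hrest⟩
    have hpos : 0 < x z := by nlinarith [hsx j₀ hj₀]
    have hxz : x z = √(#s / (#s + 1)) := by
      rw [← sq_eq_div_add_one_of_sum_sq_eq_one hz ⟨j₀, hj₀⟩ hx hsx hrest,
        Real.sqrt_sq hpos.le]
    exact ⟨hxz, fun j hj => (hval j).2 (hxz ▸ hsx j hj), hrest⟩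
  · rintro ⟨hxz, hsx, hrest⟩
    exact ⟨fun j hj => hxz ▸ (hval j).1 (hsx j hj), hrest⟩

end

theorem Fin.mem_iff_sub_card_le_of_isUpperSet {n : ℕ} {s : Finset (Fin n)}
    (hs : IsUpperSet (s : Set (Fin n))) (j : Fin n) : j ∈ s ↔ n - #s ≤ j := by
  constructor
  · intro hj
    have := card_le_card fun k hk => hs (mem_Ici.1 hk) hj
    rw [Fin.card_Ici] at this
    omega
  · intro hj
    by_contra hjs
    have := card_le_card fun k hk => mem_Ioi.2 (lt_of_not_ge fun hkj => hjs (hs hkj hk))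
    rw [Fin.card_Ioi] at this
    omega

/-- Lemma 2.2 (equality part): suppose `λ₁ ≥ … ≥ λ_n`, `∑ λᵢ² = 1`, and the set
`I = {(i,j) : i ≤ j, λᵢ − λⱼ > 1}` has the form `{1} × I₁` with `n₀ = |I| ≥ 1`
(indices 0-based). Then `∑_{(i,j)∈I} [(λᵢ − λⱼ)² − 1] = 1` holds if and only if
`n₀ < n`, `λ₁ = √(n₀/(n₀+1))`, the last `n₀` values equal `−1/√(n₀²+n₀)` and all
the other values vanish. -/
theorem gap_sum_eq_one_iff (n : ℕ) (hn : 1 ≤ n) (lam : Fin n → ℝ)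
    (hmono : Antitone lam) (hsum : ∑ i, (lam i) ^ 2 = 1)
    (I : Finset (Fin n × Fin n))
    (hI1 : I = (Finset.univ.filter
        (fun j : Fin n => lam ⟨0, by omega⟩ - lam j > 1)).image
      (fun j => ((⟨0, by omega⟩ : Fin n), j)))
    (hn0 : 1 ≤ I.card) :
    ∑ p ∈ I, ((lam p.1 - lam p.2) ^ 2 - 1) = 1 ↔
      I.card < n ∧
      lam ⟨0, by omega⟩ = Real.sqrt ((I.card : ℝ) / ((I.card : ℝ) + 1)) ∧
      (∀ k : Fin n, n - I.card ≤ k.1 →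
        lam k = -1 / Real.sqrt ((I.card : ℝ) ^ 2 + (I.card : ℝ))) ∧
      (∀ k : Fin n, 1 ≤ k.1 → k.1 < n - I.card → lam k = 0) := by
  subst hI1
  set z : Fin n := ⟨0, by omega⟩
  set F := univ.filter fun j => lam z - lam j > 1
  have hinj : Function.Injective fun j : Fin n => (z, j) := fun _ _ h => congrArg Prod.snd h
  rw [card_image_of_injective F hinj] at hn0 ⊢
  rw [sum_image fun _ _ _ _ h => hinj h]
  have hF : ∀ j, j ∈ F ↔ n - #F ≤ j :=
    Fin.mem_iff_sub_card_le_of_isUpperSet fun i j hij hi => by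
    simp only [F, coe_filter, Set.mem_ofPred_eq, mem_univ, true_and] at hi ⊢
    linarith [hmono hij]
  have hzF : z ∉ F := by simp [F]
  have hlt : #F < n := by have := (hF z).not.1 hzF; simp only [z] at this; omega
  have hmid : (∀ k ∉ insert z F, lam k = 0) ↔
      ∀ k : Fin n, 1 ≤ k.1 → k.1 < n - #F → lam k = 0 :=
    forall_congr' fun k => by
      rw [← and_imp]
      simp only [mem_insert, hF k, z, Fin.ext_iff]
      exact imp_congr_left (by omega)
  obtain ⟨j₀, hj₀⟩ := card_pos.1 hn0
  rw [sum_gap_sq_sub_one_eq_one_iff hzF hj₀ (by linarith [(mem_filter.1 hj₀).2]) hsum, hmid]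
  simp only [hF, hlt, true_and]
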